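/- arXiv:2105.10972 — 4 statements merged into one kernel-verified Lean document; each statement's English description precedes it below -/
import Mathlib

section
/- Let R be a commutative ring with 1, let T ⊆ SL₂(R), x₁, x₂ ∈ R and k₁, k₂ ∈ ℕ. Assume C(x₁) ∈ B_T(k₁) and C(x₂) ∈ B_T(k₂). Then C(x₁ + x₂) ∈ B_T(k₁ + k₂). -/
open Matrix

abbrev SL2 (R : Type*) [CommRing R] := Matrix.SpecialLinearGroup (Fin 2) R

/-- The elementary matrix with `x` in the upper-right entry. -/
def E12 {R : Type*} [CommRing R] (x : R) : SL2 R :=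
  ⟨!![1, x; 0, 1], by simp [Matrix.det_fin_two_of]⟩

/-- The elementary matrix with `x` in the lower-left entry. -/
def E21 {R : Type*} [CommRing R] (x : R) : SL2 R :=
  ⟨!![1, 0; x, 1], by simp [Matrix.det_fin_two_of]⟩

/-- The self-reproducing element `C(x) = E21(x) * E12(x)`. -/
def Csr {R : Type*} [CommRing R] (x : R) : SL2 R := E21 x * E12 x

/-- The set of conjugates of elements of `T` or of their inverses. -/
def conjSet {G : Type*} [Group G] (T : Set G) : Set G :=
  {g | ∃ A ∈ T, ∃ x : G, g = x⁻¹ * A * x ∨ g = x⁻¹ * A⁻¹ * x}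

/-- `BT T k` is the set of products of at most `k` elements, each of which is conjugate to
some `A ∈ T` or its inverse; the empty product gives `1 ∈ BT T k`. -/
def BT {G : Type*} [Group G] (T : Set G) (k : ℕ) : Set G :=
  {g | ∃ l : List G, l.length ≤ k ∧ (∀ a ∈ l, a ∈ conjSet T) ∧ l.prod = g}

/-!
Conjugating `C(x₁)` by `E21(x₂)` and multiplying by `C(x₂)` telescopes:
`E21(x₂) E21(x₁) E12(x₁) E21(x₂)⁻¹ E21(x₂) E12(x₂) = E21(x₁ + x₂) E12(x₁ + x₂)`.
Since each `B_T(k)` is closed under conjugation and `B_T(k₁) B_T(k₂) ⊆ B_T(k₁ + k₂)`,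
the theorem follows.
-/

section Elementary

variable {R : Type*} [CommRing R]

lemma E21_add (a b : R) : E21 (a + b) = E21 a * E21 b := by
  ext i j
  rw [Matrix.SpecialLinearGroup.coe_mul]
  fin_cases i <;> fin_cases j <;> simp [E21, Matrix.mul_apply, Fin.sum_univ_two, add_comm]

lemma E12_add (a b : R) : E12 (a + b) = E12 a * E12 b := by
  ext i j
  rw [Matrix.SpecialLinearGroup.coe_mul]
  fin_cases i <;> fin_cases j <;> simp [E12, Matrix.mul_apply, Fin.sum_univ_two, add_comm]

lemma Csr_add (x y : R) : Csr (x + y) = E21 y * Csr x * (E21 y)⁻¹ * Csr y := by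
  rw [Csr, Csr, Csr, E12_add, add_comm x y, E21_add]
  group

end Elementary

section ConjugacyBalls

variable {G : Type*} [Group G] {T : Set G}

lemma conj_mem_conjSet {a : G} (h : G) (ha : a ∈ conjSet T) : h * a * h⁻¹ ∈ conjSet T := by
  obtain ⟨A, hA, x, hx | hx⟩ := ha
  · exact ⟨A, hA, x * h⁻¹, Or.inl (by rw [hx]; group)⟩
  · exact ⟨A, hA, x * h⁻¹, Or.inr (by rw [hx]; group)⟩

lemma conj_mem_BT {g : G} {k : ℕ} (h : G) (hg : g ∈ BT T k) : h * g * h⁻¹ ∈ BT T k := by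
  obtain ⟨l, hlen, hconj, rfl⟩ := hg
  refine ⟨l.map (MulAut.conj h), by simpa using hlen, ?_, (map_list_prod (MulAut.conj h) l).symm⟩
  simp only [List.mem_map, forall_exists_index, and_imp]
  rintro _ a ha rfl
  exact conj_mem_conjSet h (hconj a ha)

lemma mul_mem_BT {g₁ g₂ : G} {k₁ k₂ : ℕ} (h₁ : g₁ ∈ BT T k₁) (h₂ : g₂ ∈ BT T k₂) :
    g₁ * g₂ ∈ BT T (k₁ + k₂) := by
  obtain ⟨l₁, hlen₁, hconj₁, rfl⟩ := h₁
  obtain ⟨l₂, hlen₂, hconj₂, rfl⟩ := h₂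
  refine ⟨l₁ ++ l₂, by simpa using Nat.add_le_add hlen₁ hlen₂, ?_, List.prod_append⟩
  simp only [List.mem_append]
  rintro a (ha | ha)
  exacts [hconj₁ a ha, hconj₂ a ha]

end ConjugacyBalls

theorem self_reproducing_additivity (R : Type*) [CommRing R] (T : Set (SL2 R))
    (x₁ x₂ : R) (k₁ k₂ : ℕ) (h₁ : Csr x₁ ∈ BT T k₁) (h₂ : Csr x₂ ∈ BT T k₂) :
    Csr (x₁ + x₂) ∈ BT T (k₁ + k₂) := by
  rw [Csr_add]
  exact mul_mem_BT (conj_mem_BT (E21 x₂) h₁) h₂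
end

section
/- Let R be a commutative ring with 1 and let T ⊆ SL₂(R) be a subset whose normal closure equals SL₂(R). Then l(T) = Σ_{A∈T} l(A) = R. -/
/-!
Modulo `I := l(T)` every element of `T` becomes a scalar matrix, hence central in `SL₂(R ⧸ I)`.
The preimage of the centre is a normal subgroup of `SL₂(R)` containing `T`, so it is everything;
in particular the elementary matrix `(1 1; 0 1)` is central modulo `I`, which forces `1 ∈ I`.
-/

open Matrix

/-- The level ideal `l(A) = (a - d, b, c)` of `A = (a b; c d) ∈ SL₂(R)`. -/
def levelIdeal {R : Type*} [CommRing R] (A : SL2 R) : Ideal R :=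
  Ideal.span {A.1 0 0 - A.1 1 1, A.1 0 1, A.1 1 0}

namespace Matrix.SpecialLinearGroup

variable {R S : Type*} [CommRing R] [CommRing S]

theorem levelIdeal_le_ker_iff (f : R →+* S) (A : SL2 R) :
    levelIdeal A ≤ RingHom.ker f ↔ map f A ∈ Subgroup.center (SL2 S) := by
  simp only [levelIdeal, Ideal.span_le, Set.insert_subset_iff, Set.singleton_subset_iff,
    SetLike.mem_coe, RingHom.mem_ker, map_sub, sub_eq_zero]
  rw [mem_center_iff]
  constructor
  · rintro ⟨had, hb, hc⟩
    have hA : (map f A : Matrix (Fin 2) (Fin 2) S) = scalar (Fin 2) (f (A 0 0)) := by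
      ext i j; fin_cases i <;> fin_cases j <;> simp [map_apply_coe, had, hb, hc]
    refine ⟨f (A 0 0), ?_, hA.symm⟩
    have hdet := (map f A).2
    rw [hA] at hdet
    simpa using hdet
  · rintro ⟨r, -, hr⟩
    have hentries := fun i j => congr_fun₂ hr i j
    simp only [Fin.forall_fin_two, scalar_apply, map_apply_coe, RingHom.mapMatrix_apply,
      map_apply, diagonal_apply_eq, ne_eq, zero_ne_one, one_ne_zero, not_false_eq_true,
      diagonal_apply_ne] at hentries
    obtain ⟨⟨ha, hb⟩, hc, hd⟩ := hentries
    exact ⟨ha.symm.trans hd, hb.symm, hc.symm⟩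

theorem levelIdeal_transvection (b : R) :
    levelIdeal (transvection (zero_ne_one' (Fin 2)) b) = Ideal.span {b} := by
  simp [levelIdeal, transvection_coe]

end Matrix.SpecialLinearGroup

open Matrix.SpecialLinearGroup in
theorem level_ideal_of_normally_generating_set (R : Type*) [CommRing R]
    (T : Set (SL2 R)) (hT : Subgroup.normalClosure T = ⊤) :
    (⨆ A ∈ T, levelIdeal A) = (⊤ : Ideal R) := by
  set I : Ideal R := ⨆ A ∈ T, levelIdeal A
  let N := (Subgroup.center (SL2 (R ⧸ I))).comap (map (Ideal.Quotient.mk I))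
  have hTN : T ⊆ N := fun A hA => (levelIdeal_le_ker_iff _ A).1 <| by
    rw [Ideal.mk_ker]
    exact le_iSup₂ (f := fun A _ => levelIdeal A) A hA
  have hN : N = ⊤ := top_le_iff.1 (hT ▸ Subgroup.normalClosure_le_normal hTN)
  have hE := (levelIdeal_le_ker_iff _ (transvection (zero_ne_one' (Fin 2)) (1 : R))).2
    (hN ▸ Subgroup.mem_top _)
  rwa [Ideal.mk_ker, levelIdeal_transvection, Ideal.span_singleton_one, top_le_iff] at hE
end

section
/- Let R = O_S be the ring of S-algebraic integers in a number field K such that R has infinitely many units. Then R is a ring with many units; that is, (i) for every c ∈ R − ({0} ∪ R^*) the quotient R/cR has stable range 1, and (ii) for every x ∈ R − {0} there is a unit u ∈ R with u⁴ ≠ 1 and u² ≡ 1 mod xR. -/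
open Matrix

/-- `R` is the ring of S-algebraic integers of the number field `K` with respect to the
finite set `S` of nonzero prime ideals of the ring of integers of `K`. -/
def IsSIntegers (K : Type*) [Field K] [NumberField K]
    (S : Finset (Ideal (NumberField.RingOfIntegers K))) (R : Subring K) : Prop :=
  (∀ P ∈ S, P ≠ ⊥ ∧ P.IsPrime) ∧
  (R : Set K) = {x | ∃ a b : NumberField.RingOfIntegers K, b ≠ 0 ∧
      (∀ P : Ideal (NumberField.RingOfIntegers K), P.IsPrime → P ∣ Ideal.span {b} → P ∈ S) ∧
      x = (a : K) / (b : K)}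

/-- A ring with many units: (i) `R/cR` has (Bass) stable range 1 for every
`c ∈ R - ({0} ∪ Rˣ)`; (ii) for every `x ≠ 0` there is a unit `u` with `u⁴ ≠ 1` and
`u² ≡ 1 mod xR`. -/
def ManyUnits (R : Type*) [CommRing R] : Prop :=
  (∀ c : R, c ≠ 0 → ¬ IsUnit c →
    ∀ a b : R ⧸ Ideal.span {c}, Ideal.span {a, b} = ⊤ → ∃ x, IsUnit (a + b * x)) ∧
  (∀ x : R, x ≠ 0 → ∃ u : Rˣ, (u : R) ^ 4 ≠ 1 ∧ (u : R) ^ 2 - 1 ∈ Ideal.span {x})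

/-!
For `x ≠ 0` the ring `R/xR` is finite. Indeed, write `x = c/d` with `c, d ∈ 𝓞 K` and `d` a unit
of `R`; then `R/xR` receives `𝓞 K/c`, which is finite, and the image is everything: every
element of `R` is `c'/d'` with `d'` a unit of `R`, and the inverse of the image of `d'` is a
power of it since it lies in a finite subring.

A ring with finitely many maximal ideals has stable range 1 by the Chinese remainder theorem,
which gives (i). For (ii), the kernel of `Rˣ → (R/xR)ˣ` has finite index in the infinite group
`Rˣ`, so it is infinite and contains a unit that is not a fourth root of unity.
-/

theorem Subring.val_inv_mem_of_finite {Q : Type*} [Ring Q] (T : Subring Q) [Finite T] {u : Qˣ}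
    (hu : (u : Q) ∈ T) : ((u⁻¹ : Qˣ) : Q) ∈ T := by
  have hpow : ∀ n : ℕ, ((u ^ n : Qˣ) : Q) ∈ T := fun n => by
    rw [Units.val_pow_eq_pow_val]; exact T.pow_mem hu n
  have : IsOfFinOrder u := by
    rw [← not_not (a := IsOfFinOrder u), ← injective_pow_iff_not_isOfFinOrder]
    intro hinj
    exact not_injective_infinite_finite (fun n : ℕ => (⟨_, hpow n⟩ : T))
      fun m n h => hinj (Units.ext (congrArg Subtype.val h))
  obtain ⟨n, hn⟩ := this.mem_powers_iff_mem_zpowers.mpr (inv_mem (Subgroup.mem_zpowers u))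
  exact hn ▸ hpow n

theorem Ideal.finite_quotient_of_forall_exists_mul_eq {A B : Type*} [CommRing A] [CommRing B]
    (f : A →+* B) {J : Ideal A} [Finite (A ⧸ J)] {I : Ideal B} (hJI : J.map f ≤ I)
    (hfrac : ∀ b : B, ∃ c d : A, IsUnit (f d) ∧ b * f d = f c) : Finite (B ⧸ I) := by
  let g : A ⧸ J →+* B ⧸ I := Ideal.quotientMap I f (Ideal.map_le_iff_le_comap.mp hJI)
  have hg : ∀ a : A, g a = Ideal.Quotient.mk I (f a) := fun _ => rfl
  suffices Function.Surjective g from Finite.of_surjective g this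
  intro q
  obtain ⟨b, rfl⟩ := Ideal.Quotient.mk_surjective q
  obtain ⟨c, d, hd, hbd⟩ := hfrac b
  let v := (hd.map (Ideal.Quotient.mk I)).unit
  have : Finite g.range := Finite.of_surjective g.rangeRestrict g.rangeRestrict_surjective
  have hv : (v⁻¹ : (B ⧸ I)ˣ).val ∈ g.range :=
    g.range.val_inv_mem_of_finite (u := v) ⟨d, hg d⟩
  obtain ⟨e, he⟩ := hv
  refine ⟨c * e, ?_⟩
  rw [map_mul, he, hg, ← hbd, map_mul]
  exact v.mul_inv_cancel_right _

open NumberField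

namespace IsSIntegers

variable {K : Type*} [Field K] [NumberField K] {S : Finset (Ideal (𝓞 K))} {R : Subring K}

theorem coe_mem (hR : IsSIntegers K S R) (a : 𝓞 K) : (a : K) ∈ R := by
  rw [← SetLike.mem_coe, hR.2]
  refine ⟨a, 1, one_ne_zero, fun P hP hPd => ?_, by simp⟩
  rw [Ideal.span_singleton_one, Ideal.dvd_iff_le, top_le_iff] at hPd
  exact absurd hPd hP.ne_top

def ringOfIntegersMap (hR : IsSIntegers K S R) : 𝓞 K →+* R :=
  (algebraMap (𝓞 K) K).codRestrict R.toSubsemiring hR.coe_mem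

theorem exists_mul_eq (hR : IsSIntegers K S R) (r : R) :
    ∃ c d : 𝓞 K, IsUnit (hR.ringOfIntegersMap d) ∧
      r * hR.ringOfIntegersMap d = hR.ringOfIntegersMap c := by
  have hr : (r : K) ∈ (R : Set K) := r.2
  rw [hR.2] at hr
  obtain ⟨c, d, hd, hdS, hrcd⟩ := hr
  have hdK : (d : K) ≠ 0 := RingOfIntegers.coe_ne_zero_iff.mpr hd
  have hinv : (1 / d : K) ∈ R := by
    rw [← SetLike.mem_coe, hR.2]
    exact ⟨1, d, hd, hdS, by simp⟩
  refine ⟨c, d, IsUnit.of_mul_eq_one ⟨_, hinv⟩ (Subtype.ext (mul_one_div_cancel hdK)), ?_⟩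
  exact Subtype.ext (by simp [ringOfIntegersMap, hrcd, div_mul_cancel₀ _ hdK])

theorem finite_quotient_span_singleton (hR : IsSIntegers K S R) {x : R} (hx : x ≠ 0) :
    Finite (R ⧸ Ideal.span {x}) := by
  obtain ⟨c, d, hd, hxd⟩ := hR.exists_mul_eq x
  have hc : c ≠ 0 := by
    rintro rfl
    rw [map_zero, hd.mul_left_eq_zero] at hxd
    exact hx hxd
  have : Finite (𝓞 K ⧸ Ideal.span {c}) :=
    Ideal.finiteQuotientOfFreeOfNeBot _ (by simpa [Ideal.span_singleton_eq_bot] using hc)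
  refine Ideal.finite_quotient_of_forall_exists_mul_eq hR.ringOfIntegersMap (J := Ideal.span {c}) ?_
    hR.exists_mul_eq
  rw [Ideal.map_span, Set.image_singleton, Ideal.span_singleton_le_iff_mem, ← hxd]
  exact Ideal.mul_mem_right _ _ (Ideal.mem_span_singleton_self x)

end IsSIntegers

theorem exists_isUnit_add_mul_of_finite_maximalSpectrum {Q : Type*} [CommRing Q]
    [Finite (MaximalSpectrum Q)] {a b : Q} (h : Ideal.span {a, b} = ⊤) :
    ∃ x, IsUnit (a + b * x) := by
  classical
  -- `x ≡ 1` modulo the maximal ideals containing `a`, `x ≡ 0` modulo the others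
  obtain ⟨x, hx⟩ := Ideal.exists_forall_sub_mem_ideal
    (fun _ _ h => MaximalSpectrum.isCoprime_of_ne h)
    (fun m : MaximalSpectrum Q => if a ∈ m.asIdeal then 1 else 0)
  refine ⟨x, not_not.mp fun hu => ?_⟩
  obtain ⟨m, hm, hmem⟩ := exists_max_ideal_of_mem_nonunits hu
  have hxm := hx ⟨m, hm⟩
  by_cases ham : a ∈ m
  · simp only [ham, if_true] at hxm
    have hb : b ∈ m := by
      convert m.sub_mem hmem (m.add_mem ham (m.mul_mem_left b hxm)) using 1
      ring
    refine hm.ne_top (top_le_iff.mp (h ▸ Ideal.span_le.mpr ?_))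
    rintro y (rfl | rfl) <;> assumption
  · simp only [ham, if_false, sub_zero] at hxm
    exact ham (by simpa using m.sub_mem hmem (m.mul_mem_left b hxm))

theorem exists_unit_pow_ne_one_sub_one_mem {R : Type*} [CommRing R] [IsDomain R]
    [Infinite Rˣ] (n : ℕ) [NeZero n] {I : Ideal R} [Finite (R ⧸ I)] :
    ∃ u : Rˣ, (u : R) ^ n ≠ 1 ∧ (u : R) - 1 ∈ I := by
  let f : Rˣ →* (R ⧸ I)ˣ := Units.map (Ideal.Quotient.mk I)
  have hker : (f.ker : Set Rˣ).Infinite := fun hfin => by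
    have := (Subgroup.finite_iff_finite_and_finiteIndex f.ker).mpr
      ⟨hfin.to_subtype, inferInstance⟩
    exact not_finite Rˣ
  have hroots : (rootsOfUnity n R : Set Rˣ).Finite :=
    Set.finite_coe_iff.mp (inferInstanceAs (Finite (rootsOfUnity n R)))
  obtain ⟨u, hu, hroot⟩ := (hker.sdiff hroots).nonempty
  refine ⟨u, fun h => hroot ((mem_rootsOfUnity' n u).mpr h), ?_⟩
  rw [← Ideal.Quotient.eq, map_one]
  exact congrArg Units.val (f.mem_ker.mp hu)

theorem S_integers_have_many_units
    (K : Type*) [Field K] [NumberField K]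
    (S : Finset (Ideal (NumberField.RingOfIntegers K)))
    (R : Subring K) (hR : IsSIntegers K S R) (hU : Infinite (↥R)ˣ) :
    ManyUnits ↥R := by
  have := hU
  refine ⟨fun c hc _ a b hab => ?_, fun x hx => ?_⟩
  · have := hR.finite_quotient_span_singleton hc
    exact exists_isUnit_add_mul_of_finite_maximalSpectrum hab
  · have := hR.finite_quotient_span_singleton hx
    obtain ⟨u, hu4, hu1⟩ := exists_unit_pow_ne_one_sub_one_mem (I := Ideal.span {x}) 4
    refine ⟨u, hu4, ?_⟩
    rw [show (u : R) ^ 2 - 1 = ((u : R) - 1) * ((u : R) + 1) by ring]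
    exact Ideal.mul_mem_right _ _ hu1
end

section
/- Let R = O_S be the ring of S-algebraic integers in a number field K and let P be a ramified prime divisor of 2R with R/P ≅ F₂. Set R̄ := R/P² and let P̄ denote the image of P in R̄ (so 2 = 0 in R̄, F₂ is a subring of R̄, and SL₂(F₂) is a subgroup of SL₂(R̄)). Let K denote the kernel of the reduction homomorphism SL₂(R̄) → SL₂(R̄/P̄) = SL₂(F₂). Then there is a group homomorphism q: SL₂(R̄) → (P̄, +) such that q((a b; c d)) = a − 1 + b + c for every (a b; c d) ∈ K, and q vanishes on the subgroup SL₂(F₂) ⊆ SL₂(R̄). -/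
open Matrix

/-! Let `J` be the image of `P` in `R̄ = R/P²`, so `J² = 0` and `R̄/J = 𝔽₂`. Reducing modulo `J`
and lifting back along `𝔽₂ ⊆ R̄` is a retraction `σ` of `SL₂(R̄)` onto `SL₂(𝔽₂)`, and
`g σ(g)⁻¹` lies in the congruence kernel `K`. As `J² = 0`, products in `K` are `kl = k + l - 1`,
so `f(k) = tr(N k) - 1 = a - 1 + b + c` with `N = !![1, 1; 1, 0]` is additive on `K`. Every
element of `K` has trace `2 = 0`, and the `SL₂(𝔽₂)`-conjugates of `N` are `N` and `N + 1` (the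
roots of `X² + X + 1`), so `f` is invariant under conjugation by `SL₂(𝔽₂)`. Hence
`q(g) = f(g σ(g)⁻¹)` is a homomorphism, because
`gh σ(gh)⁻¹ = g σ(g)⁻¹ · σ(g) (h σ(h)⁻¹) σ(g)⁻¹`. -/

def fibMatrix (A : Type*) [CommRing A] : Matrix (Fin 2) (Fin 2) A := !![1, 1; 1, 0]

def fibChar {A : Type*} [CommRing A] (g : SL2 A) : A :=
  trace (fibMatrix A * (g : Matrix (Fin 2) (Fin 2) A)) - 1

section FibMatrix

variable {A : Type*} [CommRing A]

lemma trace_fibMatrix_mul (k : Matrix (Fin 2) (Fin 2) A) :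
    trace (fibMatrix A * k) = k 0 0 + k 0 1 + k 1 0 := by
  rw [trace_fin_two, mul_apply, mul_apply, Fin.sum_univ_two, Fin.sum_univ_two]
  simp [fibMatrix]
  ring

lemma trace_fibMatrix : trace (fibMatrix A) = 1 := by
  simp [fibMatrix, trace_fin_two]

lemma RingHom.mapMatrix_fibMatrix {B : Type*} [CommRing B] (f : A →+* B) :
    f.mapMatrix (fibMatrix A) = fibMatrix B := by
  ext i j
  fin_cases i <;> fin_cases j <;> simp [fibMatrix]

lemma exists_adjugate_mul_fibMatrix_mul_eq (v : SL2 (ZMod 2)) :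
    ∃ c : ZMod 2, adjugate (v : Matrix (Fin 2) (Fin 2) (ZMod 2)) * fibMatrix (ZMod 2) *
      (v : Matrix (Fin 2) (Fin 2) (ZMod 2)) = fibMatrix (ZMod 2) + scalar (Fin 2) c := by
  decide +revert

lemma fibChar_eq (g : SL2 A) : fibChar g = g.1 0 0 - 1 + g.1 0 1 + g.1 1 0 := by
  rw [fibChar, trace_fibMatrix_mul]
  ring

lemma fibChar_conj (ι : ZMod 2 →+* A) (v : SL2 (ZMod 2)) {k : SL2 A}
    (hk : trace (k : Matrix (Fin 2) (Fin 2) A) = 0) :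
    fibChar (v.map ι * k * (v.map ι)⁻¹) = fibChar k := by
  obtain ⟨c, hc⟩ := exists_adjugate_mul_fibMatrix_mul_eq v
  have hconj := congrArg ι.mapMatrix hc
  rw [map_mul, map_mul, map_add, RingHom.map_adjugate, RingHom.mapMatrix_fibMatrix,
    ← Matrix.SpecialLinearGroup.map_apply_coe, RingHom.mapMatrix_apply] at hconj
  rw [fibChar, fibChar, Matrix.SpecialLinearGroup.coe_mul, Matrix.SpecialLinearGroup.coe_mul,
    Matrix.SpecialLinearGroup.coe_inv, ← Matrix.mul_assoc, ← Matrix.mul_assoc, trace_mul_cycle,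
    ← Matrix.mul_assoc, hconj, Matrix.add_mul, trace_add]
  simp [scalar_apply, diagonal_map, ← smul_eq_diagonal_mul, hk]

end FibMatrix

lemma Ideal.mul_eq_zero_of_sq_eq_bot {A : Type*} [CommRing A] {J : Ideal A} (hJ : J ^ 2 = ⊥)
    {x y : A} (hx : x ∈ J) (hy : y ∈ J) : x * y = 0 := by
  have hxy : x * y ∈ J ^ 2 := pow_two J ▸ Ideal.mul_mem_mul hx hy
  rwa [hJ, Ideal.mem_bot] at hxy

abbrev congrKernel {A : Type*} [CommRing A] (r : A →+* ZMod 2) : Subgroup (SL2 A) :=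
  (Matrix.SpecialLinearGroup.map r).ker

section CongrKernel

variable {A : Type*} [CommRing A] {r : A →+* ZMod 2}

lemma sub_one_apply_mem_ker {k : SL2 A} (hk : k ∈ congrKernel r) (i j : Fin 2) :
    ((k : Matrix (Fin 2) (Fin 2) A) - 1) i j ∈ RingHom.ker r := by
  have hkij := congrArg (fun g : SL2 (ZMod 2) ↦ (g : Matrix (Fin 2) (Fin 2) (ZMod 2)) i j) hk
  simp only [Matrix.SpecialLinearGroup.map_apply_coe, RingHom.mapMatrix_apply, Matrix.map_apply,
    Matrix.SpecialLinearGroup.coe_one] at hkij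
  rw [RingHom.mem_ker, Matrix.sub_apply, map_sub, hkij, one_apply, one_apply]
  split_ifs <;> simp

lemma mem_congrKernel_of_sub_one_mem {k : SL2 A} (h00 : k.1 0 0 - 1 ∈ RingHom.ker r)
    (h11 : k.1 1 1 - 1 ∈ RingHom.ker r) (h01 : k.1 0 1 ∈ RingHom.ker r)
    (h10 : k.1 1 0 ∈ RingHom.ker r) : k ∈ congrKernel r := by
  rw [RingHom.mem_ker, map_sub, map_one, sub_eq_zero] at h00 h11
  rw [RingHom.mem_ker] at h01 h10
  ext i j
  fin_cases i <;> fin_cases j <;> simp [h00, h11, h01, h10]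

lemma fibChar_mem_ker {k : SL2 A} (hk : k ∈ congrKernel r) : fibChar k ∈ RingHom.ker r := by
  have h00 : k.1 0 0 - 1 ∈ RingHom.ker r := by simpa using sub_one_apply_mem_ker hk 0 0
  have h01 : k.1 0 1 ∈ RingHom.ker r := by simpa using sub_one_apply_mem_ker hk 0 1
  have h10 : k.1 1 0 ∈ RingHom.ker r := by simpa using sub_one_apply_mem_ker hk 1 0
  rw [fibChar_eq]
  exact add_mem (add_mem h00 h01) h10

lemma sub_one_mul_sub_one_eq_zero (hsq : RingHom.ker r ^ 2 = ⊥) {k l : SL2 A}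
    (hk : k ∈ congrKernel r) (hl : l ∈ congrKernel r) :
    ((k : Matrix (Fin 2) (Fin 2) A) - 1) * ((l : Matrix (Fin 2) (Fin 2) A) - 1) = 0 := by
  ext i j
  rw [mul_apply, Matrix.zero_apply]
  exact Finset.sum_eq_zero fun m _ ↦ Ideal.mul_eq_zero_of_sq_eq_bot hsq
    (sub_one_apply_mem_ker hk i m) (sub_one_apply_mem_ker hl m j)

lemma trace_eq_two_of_mem_congrKernel (hsq : RingHom.ker r ^ 2 = ⊥) {k : SL2 A}
    (hk : k ∈ congrKernel r) : trace (k : Matrix (Fin 2) (Fin 2) A) = 2 := by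
  have hdet := k.2
  rw [det_fin_two] at hdet
  have h1 := Ideal.mul_eq_zero_of_sq_eq_bot hsq (sub_one_apply_mem_ker hk 0 0)
    (sub_one_apply_mem_ker hk 1 1)
  have h2 := Ideal.mul_eq_zero_of_sq_eq_bot hsq (sub_one_apply_mem_ker hk 0 1)
    (sub_one_apply_mem_ker hk 1 0)
  simp only [Matrix.sub_apply, one_apply_eq, one_apply_ne zero_ne_one, one_apply_ne one_ne_zero,
    sub_zero] at h1 h2
  rw [trace_fin_two]
  linear_combination hdet - h1 + h2

lemma fibChar_mul_of_mem_congrKernel (hsq : RingHom.ker r ^ 2 = ⊥) {k l : SL2 A}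
    (hk : k ∈ congrKernel r) (hl : l ∈ congrKernel r) :
    fibChar (k * l) = fibChar k + fibChar l := by
  have hkl : ((k * l : SL2 A) : Matrix (Fin 2) (Fin 2) A) = k + l - 1 := by
    rw [Matrix.SpecialLinearGroup.coe_mul, ← sub_eq_zero,
      ← sub_one_mul_sub_one_eq_zero hsq hk hl]
    noncomm_ring
  simp only [fibChar, hkl, Matrix.mul_sub, Matrix.mul_add, trace_sub, trace_add, Matrix.mul_one,
    trace_fibMatrix]
  ring

end CongrKernel

section Retraction

variable {A : Type*} [CommRing A] (r : A →+* ZMod 2) (ι : ZMod 2 →+* A)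

def retraction : SL2 A →* SL2 A :=
  (Matrix.SpecialLinearGroup.map ι).comp (Matrix.SpecialLinearGroup.map r)

lemma map_retraction (g : SL2 A) :
    Matrix.SpecialLinearGroup.map r (retraction r ι g) = Matrix.SpecialLinearGroup.map r g := by
  have hrι (x : ZMod 2) : r (ι x) = x :=
    RingHom.congr_fun (Subsingleton.elim (r.comp ι) (RingHom.id _)) x
  ext i j
  simp [retraction, hrι]

lemma mul_inv_retraction_mem_congrKernel (g : SL2 A) :
    g * (retraction r ι g)⁻¹ ∈ congrKernel r := by
  rw [MonoidHom.mem_ker, map_mul, map_inv, map_retraction, mul_inv_cancel]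

lemma retraction_eq_one_of_mem_congrKernel {k : SL2 A} (hk : k ∈ congrKernel r) :
    retraction r ι k = 1 := by
  rw [retraction, MonoidHom.comp_apply, hk, map_one]

lemma retraction_eq_self {g : SL2 A} (hg : ∀ i j, g.1 i j = 0 ∨ g.1 i j = 1) :
    retraction r ι g = g := by
  ext i j
  rcases hg i j with h | h <;> simp [retraction, h]

variable {r}

lemma fibChar_mul_inv_retraction_mul (hsq : RingHom.ker r ^ 2 = ⊥) (g h : SL2 A) :
    fibChar (g * h * (retraction r ι (g * h))⁻¹) =
      fibChar (g * (retraction r ι g)⁻¹) + fibChar (h * (retraction r ι h)⁻¹) := by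
  have hsplit : g * h * (retraction r ι (g * h))⁻¹ = g * (retraction r ι g)⁻¹ *
      (retraction r ι g * (h * (retraction r ι h)⁻¹) * (retraction r ι g)⁻¹) := by
    rw [map_mul]
    group
  have hh := mul_inv_retraction_mem_congrKernel r ι h
  have h2 : (2 : A) = 0 := by rw [← map_ofNat ι 2]; exact map_zero ι
  rw [hsplit, fibChar_mul_of_mem_congrKernel hsq (mul_inv_retraction_mem_congrKernel r ι g)
    ((MonoidHom.normal_ker _).conj_mem _ hh _)]
  congr 1
  exact fibChar_conj ι _ (h2 ▸ trace_eq_two_of_mem_congrKernel hsq hh)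

def fibHom (hsq : RingHom.ker r ^ 2 = ⊥) : SL2 A →* Multiplicative (RingHom.ker r) :=
  MonoidHom.mk'
    (fun g ↦ Multiplicative.ofAdd ⟨fibChar (g * (retraction r ι g)⁻¹),
      fibChar_mem_ker (mul_inv_retraction_mem_congrKernel r ι g)⟩)
    (fun g h ↦ by
      rw [← ofAdd_add]
      exact congrArg _ (Subtype.ext (fibChar_mul_inv_retraction_mul ι hsq g h)))

end Retraction

theorem exists_monoidHom_SL2_extending_fibChar {A : Type*} [CommRing A] (r : A →+* ZMod 2)
    (ι : ZMod 2 →+* A) {J : Ideal A} (hrJ : RingHom.ker r = J) (hsq : J ^ 2 = ⊥) :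
    ∃ q : SL2 A →* Multiplicative J,
      (∀ g : SL2 A, g.1 0 0 - 1 ∈ J → g.1 1 1 - 1 ∈ J → g.1 0 1 ∈ J → g.1 1 0 ∈ J →
        ((Multiplicative.toAdd (q g) : J) : A) = g.1 0 0 - 1 + g.1 0 1 + g.1 1 0) ∧
      (∀ g : SL2 A, (∀ i j, g.1 i j = 0 ∨ g.1 i j = 1) → q g = 1) := by
  subst hrJ
  refine ⟨fibHom ι hsq, fun g h00 h11 h01 h10 ↦ ?_, fun g hg ↦ ?_⟩
  · show fibChar (g * (retraction r ι g)⁻¹) = _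
    rw [retraction_eq_one_of_mem_congrKernel r ι
      (mem_congrKernel_of_sub_one_mem h00 h11 h01 h10), inv_one, mul_one, fibChar_eq]
  · show Multiplicative.ofAdd _ = Multiplicative.ofAdd 0
    congr 1
    ext
    show fibChar (g * (retraction r ι g)⁻¹) = 0
    rw [retraction_eq_self r ι hg, mul_inv_cancel, fibChar_eq]
    simp

theorem ramified_abelianization_hom_general
    (K : Type*) [Field K]
    (R : Subring K)
    (P : Ideal ↥R) (hPr : P ^ 2 ∣ Ideal.span {(2 : ↥R)})
    (hPc : Nat.card (↥R ⧸ P) = 2) :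
    ∃ q : SL2 (↥R ⧸ P ^ 2) →*
        Multiplicative ↥(P.map (Ideal.Quotient.mk (P ^ 2))),
      (∀ A : SL2 (↥R ⧸ P ^ 2),
        A.1 0 0 - 1 ∈ P.map (Ideal.Quotient.mk (P ^ 2)) →
        A.1 1 1 - 1 ∈ P.map (Ideal.Quotient.mk (P ^ 2)) →
        A.1 0 1 ∈ P.map (Ideal.Quotient.mk (P ^ 2)) →
        A.1 1 0 ∈ P.map (Ideal.Quotient.mk (P ^ 2)) →
          ((Multiplicative.toAdd (q A) : ↥(P.map (Ideal.Quotient.mk (P ^ 2)))) : ↥R ⧸ P ^ 2)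
            = A.1 0 0 - 1 + A.1 0 1 + A.1 1 0) ∧
      (∀ A : SL2 (↥R ⧸ P ^ 2), (∀ i j, A.1 i j = 0 ∨ A.1 i j = 1) → q A = 1) := by
  have : Finite (↥R ⧸ P) := Nat.finite_of_card_ne_zero (by rw [hPc]; exact two_ne_zero)
  have : Fintype (↥R ⧸ P) := Fintype.ofFinite _
  let e : ↥R ⧸ P ≃+* ZMod 2 :=
    (ZMod.ringEquivOfPrime _ Nat.prime_two (Nat.card_eq_fintype_card.symm.trans hPc)).symm
  have hle : P ^ 2 ≤ P := Ideal.pow_le_self two_ne_zero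
  have : Nontrivial (↥R ⧸ P) := e.symm.injective.nontrivial
  have : Nontrivial (↥R ⧸ P ^ 2) := (Ideal.Quotient.factor_surjective hle).nontrivial
  have h2 : (2 : ↥R ⧸ P ^ 2) = 0 := by
    rw [← map_ofNat (Ideal.Quotient.mk (P ^ 2)) 2, Ideal.Quotient.eq_zero_iff_mem]
    exact Ideal.le_of_dvd hPr (Ideal.mem_span_singleton_self 2)
  have : CharP (↥R ⧸ P ^ 2) 2 := CharTwo.of_one_ne_zero_of_two_eq_zero one_ne_zero h2
  refine exists_monoidHom_SL2_extending_fibChar (e.toRingHom.comp (Ideal.Quotient.factor hle))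
    (ZMod.castHom (dvd_refl 2) _) ?_ ?_
  · rw [RingHom.ker_comp_of_injective _ e.injective, Ideal.Quotient.factor_ker]
  · rw [← Ideal.map_pow, Ideal.map_quotient_self]

set_option synthInstance.maxHeartbeats 1000000 in
set_option maxHeartbeats 2000000 in
theorem ramified_abelianization_hom
    (K : Type*) [Field K] [NumberField K]
    (S : Finset (Ideal (NumberField.RingOfIntegers K)))
    (R : Subring K) (hR : IsSIntegers K S R)
    (P : Ideal ↥R) (hPp : P.IsPrime) (hPr : P ^ 2 ∣ Ideal.span {(2 : ↥R)})
    (hPc : Nat.card (↥R ⧸ P) = 2) :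
    ∃ q : SL2 (↥R ⧸ P ^ 2) →*
        Multiplicative ↥(P.map (Ideal.Quotient.mk (P ^ 2))),
      (∀ A : SL2 (↥R ⧸ P ^ 2),
        A.1 0 0 - 1 ∈ P.map (Ideal.Quotient.mk (P ^ 2)) →
        A.1 1 1 - 1 ∈ P.map (Ideal.Quotient.mk (P ^ 2)) →
        A.1 0 1 ∈ P.map (Ideal.Quotient.mk (P ^ 2)) →
        A.1 1 0 ∈ P.map (Ideal.Quotient.mk (P ^ 2)) →
          ((Multiplicative.toAdd (q A) : ↥(P.map (Ideal.Quotient.mk (P ^ 2)))) : ↥R ⧸ P ^ 2)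
            = A.1 0 0 - 1 + A.1 0 1 + A.1 1 0) ∧
      (∀ A : SL2 (↥R ⧸ P ^ 2), (∀ i j, A.1 i j = 0 ∨ A.1 i j = 1) → q A = 1) :=
  ramified_abelianization_hom_general K R P hPr hPc
end
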